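/- arXiv:2605.06346 — 5 statements merged into one kernel-verified Lean document; each statement's English description precedes it below -/
import Mathlib

section
/- Let A be a nonempty finite type and let f : A → V and g : A → Ṽ be functions into finite types. Define the capacities C_f = ⨆_μ I_μ[X : f(X)] and C_g = ⨆_μ I_μ[X : g(X)], where the suprema range over all probability measures μ on A and X denotes the identity random variable with law μ. Then −(⨆_μ H_μ[g(X) | f(X)]) ≤ C_f − C_g ≤ ⨆_μ H_μ[f(X) | g(X)]. (Control part of the Universal bridge-gap bounds, eq. (control_gap), in the deterministic rollout-context form where the terminal quotient V = f(action sequence) and the observed terminal quotient Ṽ = g(action sequence).) -/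
open MeasureTheory Real

section InfoDefs

variable {Ω : Type*} [MeasurableSpace Ω]

/-- Shannon entropy (natural log) of a random variable `X` with values in a finite type,
with respect to the measure `μ`. -/
noncomputable def ent (μ : Measure Ω) {S : Type*} [Fintype S] (X : Ω → S) : ℝ :=
  ∑ s : S, Real.negMulLog (μ (X ⁻¹' {s})).toReal

/-- Conditional entropy `H[X | Y] = H[X, Y] - H[Y]`. -/
noncomputable def condEnt (μ : Measure Ω) {S T : Type*} [Fintype S] [Fintype T]
    (X : Ω → S) (Y : Ω → T) : ℝ :=
  ent μ (fun ω => (X ω, Y ω)) - ent μ Y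

/-- Mutual information `I[X : Y] = H[X] + H[Y] - H[X, Y]`. -/
noncomputable def mutInfo (μ : Measure Ω) {S T : Type*} [Fintype S] [Fintype T]
    (X : Ω → S) (Y : Ω → T) : ℝ :=
  ent μ X + ent μ Y - ent μ (fun ω => (X ω, Y ω))

/-- Conditional mutual information `I[X : Y | Z] = H[X | Z] + H[Y | Z] - H[X, Y | Z]`. -/
noncomputable def condMutInfo (μ : Measure Ω) {S T U : Type*} [Fintype S] [Fintype T]
    [Fintype U] (X : Ω → S) (Y : Ω → T) (Z : Ω → U) : ℝ :=
  condEnt μ X Z + condEnt μ Y Z - condEnt μ (fun ω => (X ω, Y ω)) Z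

end InfoDefs

/-! Since `f(X)` and `g(X)` are functions of `X`, `I[X : f(X)] = H[f(X)]`, and
`H[f(X)] ≤ H[f(X), g(X)] = H[g(X)] + H[f(X) | g(X)]`. Taking suprema over the law of `X` gives
`C_f ≤ C_g + ⨆ H[f(X) | g(X)]`, and the lower bound is the same inequality with `f`, `g`
swapped. -/

open Finset

lemma Real.negMulLog_sum_le {ι : Type*} (s : Finset ι) (w : ι → ℝ) (hw : ∀ i ∈ s, 0 ≤ w i) :
    negMulLog (∑ i ∈ s, w i) ≤ ∑ i ∈ s, negMulLog (w i) := by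
  have term (i : ι) (hi : i ∈ s) : -(w i * log (∑ j ∈ s, w j)) ≤ negMulLog (w i) := by
    rcases (hw i hi).eq_or_lt with h | h
    · simp [← h]
    · have : log (w i) ≤ log (∑ j ∈ s, w j) := log_le_log h (single_le_sum hw hi)
      simp only [negMulLog_eq_neg, neg_le_neg_iff]
      gcongr
  calc negMulLog (∑ i ∈ s, w i) = ∑ i ∈ s, -(w i * log (∑ j ∈ s, w j)) := by
        simp [negMulLog, sum_mul]
    _ ≤ ∑ i ∈ s, negMulLog (w i) := sum_le_sum term

lemma ciSup_le_ciSup_add_ciSup {ι α : Type*} [Nonempty ι] [ConditionallyCompleteLattice α]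
    [Add α] [AddLeftMono α] [AddRightMono α] {F G H : ι → α}
    (hG : BddAbove (Set.range G)) (hH : BddAbove (Set.range H)) (h : ∀ i, F i ≤ G i + H i) :
    ⨆ i, F i ≤ (⨆ i, G i) + ⨆ i, H i :=
  ciSup_le fun i => (h i).trans (add_le_add (le_ciSup hG i) (le_ciSup hH i))

section Entropy

variable {Ω : Type*} [MeasurableSpace Ω] {S T : Type*} [Fintype S] [Fintype T]

lemma ent_nonneg (μ : Measure Ω) [IsProbabilityMeasure μ] (X : Ω → S) : 0 ≤ ent μ X :=
  sum_nonneg fun _ _ => negMulLog_nonneg measureReal_nonneg measureReal_le_one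

lemma ent_le_card (μ : Measure Ω) (X : Ω → S) : ent μ X ≤ Fintype.card S := by
  calc ent μ X ≤ ∑ _s : S, (1 : ℝ) := sum_le_sum fun _ _ =>
        (negMulLog_le_one_sub_self measureReal_nonneg).trans (sub_le_self _ measureReal_nonneg)
    _ = Fintype.card S := by simp

lemma condEnt_le_card (μ : Measure Ω) [IsProbabilityMeasure μ] (X : Ω → S) (Y : Ω → T) :
    condEnt μ X Y ≤ Fintype.card (S × T) := by
  rw [condEnt]
  linarith [ent_le_card μ (fun ω => (X ω, Y ω)), ent_nonneg μ Y]

/-- Subadditivity of `negMulLog` over the atoms in each fibre of `φ`. -/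
lemma ent_comp_le [DiscreteMeasurableSpace Ω] (μ : Measure Ω) [IsFiniteMeasure μ]
    (Z : Ω → S) (φ : S → T) : ent μ (fun ω => φ (Z ω)) ≤ ent μ Z := by
  classical
  have fibre (t : T) : μ.real ((fun ω => φ (Z ω)) ⁻¹' {t}) =
      ∑ s with φ s = t, μ.real (Z ⁻¹' {s}) := by
    rw [sum_measureReal_preimage_singleton _ fun _ _ => MeasurableSet.of_discrete]
    congr 1
    ext ω
    simp
  calc ent μ (fun ω => φ (Z ω))
      = ∑ t : T, negMulLog (∑ s with φ s = t, μ.real (Z ⁻¹' {s})) :=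
        sum_congr rfl fun t _ => by rw [← fibre]; rfl
    _ ≤ ∑ t : T, ∑ s with φ s = t, negMulLog (μ.real (Z ⁻¹' {s})) :=
        sum_le_sum fun t _ => negMulLog_sum_le _ _ fun _ _ => measureReal_nonneg
    _ = ent μ Z := sum_fiberwise _ φ _

variable [DiscreteMeasurableSpace Ω] (μ : Measure Ω) [IsFiniteMeasure μ]

lemma ent_le_ent_add_condEnt (X : Ω → S) (Y : Ω → T) :
    ent μ X ≤ ent μ Y + condEnt μ X Y := by
  have := ent_comp_le μ (fun ω => (X ω, Y ω)) Prod.fst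
  rw [condEnt]
  linarith

/-- `H[X, f X] = H[X]`, since each of `(X, f X)` and `X` is a function of the other. -/
lemma mutInfo_id_eq_ent [Fintype Ω] (f : Ω → S) : mutInfo μ (fun ω => ω) f = ent μ f := by
  have h₁ := ent_comp_le μ (fun ω => ω) fun ω => (ω, f ω)
  have h₂ := ent_comp_le μ (fun ω => (ω, f ω)) Prod.fst
  rw [mutInfo]
  linarith

end Entropy

lemma iSup_mutInfo_le_iSup_mutInfo_add_iSup_condEnt {A : Type*} [Fintype A] [Nonempty A]
    [MeasurableSpace A] [DiscreteMeasurableSpace A] {V W : Type*} [Fintype V] [Fintype W]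
    (f : A → V) (g : A → W) :
    ⨆ μ : ProbabilityMeasure A, mutInfo (μ : Measure A) (fun a => a) f ≤
      (⨆ μ : ProbabilityMeasure A, mutInfo (μ : Measure A) (fun a => a) g) +
        ⨆ μ : ProbabilityMeasure A, condEnt (μ : Measure A) f g := by
  inhabit A
  refine ciSup_le_ciSup_add_ciSup ⟨Fintype.card W, ?_⟩ ⟨Fintype.card (V × W), ?_⟩ fun μ => ?_
  · rintro _ ⟨μ, rfl⟩
    simpa only [mutInfo_id_eq_ent] using ent_le_card _ g
  · rintro _ ⟨μ, rfl⟩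
    exact condEnt_le_card _ f g
  · simpa only [mutInfo_id_eq_ent] using ent_le_ent_add_condEnt _ f g

/-- **Universal bridge-gap bounds, control part** (deterministic rollout-context form).
For a nonempty finite action-sequence type `A` and deterministic terminal quotients
`f : A → V` (terminal environment quotient) and `g : A → Vobs` (observed terminal
quotient), the capacities `C_f = ⨆_μ I_μ[X : f(X)]` and `C_g = ⨆_μ I_μ[X : g(X)]`
satisfy `−(⨆_μ H_μ[g(X)|f(X)]) ≤ C_f − C_g ≤ ⨆_μ H_μ[f(X)|g(X)]`, where `X` denotes
the identity random variable on `A` with law `μ`. -/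
theorem bridge_gap_control
    {A : Type*} [Fintype A] [Nonempty A]
    [MeasurableSpace A] [MeasurableSingletonClass A]
    {V Vobs : Type*} [Fintype V] [Fintype Vobs]
    (f : A → V) (g : A → Vobs) :
    -(⨆ μ : ProbabilityMeasure A, condEnt (μ : Measure A) g f) ≤
        (⨆ μ : ProbabilityMeasure A, mutInfo (μ : Measure A) (fun a => a) f) -
          (⨆ μ : ProbabilityMeasure A, mutInfo (μ : Measure A) (fun a => a) g) ∧
      (⨆ μ : ProbabilityMeasure A, mutInfo (μ : Measure A) (fun a => a) f) -
          (⨆ μ : ProbabilityMeasure A, mutInfo (μ : Measure A) (fun a => a) g) ≤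
        ⨆ μ : ProbabilityMeasure A, condEnt (μ : Measure A) f g := by
  constructor
  · linarith [iSup_mutInfo_le_iSup_mutInfo_add_iSup_condEnt g f]
  · linarith [iSup_mutInfo_le_iSup_mutInfo_add_iSup_condEnt f g]
end

section
/- Let U be a nonempty finite type and J_i, J_j : U → ℝ. Define the objective-difference oscillation Ω = sup over u, v ∈ U of ((J_i(u) − J_j(u)) − (J_i(v) − J_j(v))). If û ∈ U is η-optimal for J_i, i.e. J_i(u) − J_i(û) ≤ η for all u ∈ U, then the J_j-regret of û satisfies (sup over u ∈ U of J_j(u)) − J_j(û) ≤ η + Ω. (Tight uniform regret transfer, upper-bound part.) -/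
/-- **Tight uniform regret transfer, upper-bound part.**
If `û` is `η`-optimal for `J_i` over a nonempty finite option class `U`, then its
`J_j`-regret is at most `η + Ω`, where `Ω` is the oscillation of `J_i − J_j` over `U`. -/
theorem regret_transfer {U : Type*} [Fintype U] [Nonempty U]
    (Ji Jj : U → ℝ) (η : ℝ) (hη : 0 ≤ η) (uhat : U)
    (hopt : ∀ u, Ji u - Ji uhat ≤ η) :
    (⨆ u, Jj u) - Jj uhat ≤
      η + ⨆ u, ⨆ v, ((Ji u - Jj u) - (Ji v - Jj v)) := by
  rw [sub_le_iff_le_add]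
  apply ciSup_le
  intro u
  have h1 : (Ji uhat - Jj uhat) - (Ji u - Jj u) ≤
      ⨆ u', ⨆ v, ((Ji u' - Jj u') - (Ji v - Jj v)) := by
    have h2 : (Ji uhat - Jj uhat) - (Ji u - Jj u) ≤
        ⨆ v, ((Ji uhat - Jj uhat) - (Ji v - Jj v)) :=
      le_ciSup (f := fun v => (Ji uhat - Jj uhat) - (Ji v - Jj v)) (Finite.bddAbove_range _) u
    exact h2.trans (le_ciSup (f := fun u' => ⨆ v, ((Ji u' - Jj u') - (Ji v - Jj v))) (Finite.bddAbove_range _) uhat)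
  have := hopt u
  linarith
end

section
/- For every η ≥ 0 and Ω ≥ 0 with η + Ω ≤ 1 there exist a two-element set U = {a, b} and functions J_i, J_j : U → [0,1] such that: a is η-optimal for J_i over U; the oscillation of J_i − J_j over U equals Ω; and the J_j-regret of a equals exactly η + Ω. Concretely, J_i(b) = J_j(b) = 1, J_i(a) = 1 − η, J_j(a) = 1 − η − Ω works. (Tightness part of the Tight uniform regret transfer theorem.) -/
lemma bool_iSup (f : Bool → ℝ) : (⨆ u, f u) = max (f false) (f true) := by
  apply le_antisymm
  · exact ciSup_le (fun b => by cases b <;> simp [le_max_left, le_max_right])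
  · exact max_le (le_ciSup (Set.Finite.bddAbove (Set.finite_range f)) false)
      (le_ciSup (Set.Finite.bddAbove (Set.finite_range f)) true)

/-- **Tight uniform regret transfer, tightness part.**
For every `η ≥ 0` and `Ω ≥ 0` with `η + Ω ≤ 1` there is a two-element option class
(`Bool`, with `a = false`, `b = true`) and `[0,1]`-valued objectives `J_i, J_j` such that
`a` is `η`-optimal for `J_i`, the oscillation of `J_i − J_j` equals `Ω`, and the
`J_j`-regret of `a` equals exactly `η + Ω`.  Concretely
`J_i b = J_j b = 1`, `J_i a = 1 − η`, `J_j a = 1 − η − Ω` works. -/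
theorem regret_transfer_tight (η Ω : ℝ) (hη : 0 ≤ η) (hΩ : 0 ≤ Ω) (hsum : η + Ω ≤ 1) :
    ∃ Ji Jj : Bool → ℝ,
      (∀ u, Ji u ∈ Set.Icc (0 : ℝ) 1) ∧ (∀ u, Jj u ∈ Set.Icc (0 : ℝ) 1) ∧
      Ji true = 1 ∧ Jj true = 1 ∧ Ji false = 1 - η ∧ Jj false = 1 - η - Ω ∧
      (∀ u, Ji u - Ji false ≤ η) ∧
      (⨆ u, ⨆ v, ((Ji u - Jj u) - (Ji v - Jj v))) = Ω ∧
      (⨆ u, Jj u) - Jj false = η + Ω := by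
  refine ⟨fun b => if b then 1 else 1 - η, fun b => if b then 1 else 1 - η - Ω,
    ?_, ?_, rfl, rfl, rfl, rfl, ?_, ?_, ?_⟩
  · intro u; cases u <;> constructor <;> simp <;> linarith
  · intro u; cases u <;> constructor <;> simp <;> linarith
  · intro u; cases u <;> simp <;> linarith
  · have h1 : ∀ u : Bool, (⨆ v : Bool, (((if u then (1:ℝ) else 1 - η) - (if u then 1 else 1 - η - Ω)) - ((if v then 1 else 1 - η) - (if v then 1 else 1 - η - Ω)))) = if u then 0 else Ω := by
      intro u
      rw [bool_iSup]
      cases u <;> simp <;> exact hΩ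
    calc (⨆ u : Bool, ⨆ v : Bool, (((if u then (1:ℝ) else 1 - η) - (if u then 1 else 1 - η - Ω)) - ((if v then 1 else 1 - η) - (if v then 1 else 1 - η - Ω))))
        = ⨆ u : Bool, (if u then 0 else Ω) := by
          exact iSup_congr h1
      _ = Ω := by rw [bool_iSup]; simp [max_eq_left hΩ]
  · rw [bool_iSup]; simp; rw [max_eq_right (by linarith)]; ring
end

section
/- Let (A_1, …, A_T) and (O_1, …, O_T) be random variables on a common probability space with values in finite types, and write A^t = (A_1,…,A_t), O^t = (O_1,…,O_t) (with A^0, O^0 trivial). Then Massey's conservation law holds: Σ_{t=1}^{T} I[A^t : O_t | O^{t−1}] + Σ_{t=1}^{T} I[O^{t−1} : A_t | A^{t−1}] = I[A^T : O^T]. That is, directed information from actions to observations plus directed information (plasticity) from past observations to actions equals the total mutual information between the action and observation sequences. (Identity underlying Theorem 'Finite shared-bridge budget'.) -/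
open MeasureTheory Real

/-- The prefix random variable `X^t = (X_1, …, X_t)` of a sequence of random
variables indexed from `1`. -/
def prefixRV {Ω : Type*} {F : ℕ → Type*} (X : (t : ℕ) → Ω → F t) (t : ℕ) :
    Ω → ((i : Fin t) → F (i.val + 1)) :=
  fun ω i => X (i.val + 1) ω



section Aux

variable {Ω : Type*} [MeasurableSpace Ω]

lemma ent_eq_of_inj (μ : Measure Ω) {S T : Type*} [Fintype S] [Fintype T]
    (X : Ω → S) (Y : Ω → T) (f : S → T) (hf : Function.Injective f)
    (h : ∀ ω, Y ω = f (X ω)) : ent μ Y = ent μ X := by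
  classical
  unfold ent
  have hY : Y = fun ω => f (X ω) := funext h
  subst hY
  calc ∑ t : T, Real.negMulLog (μ ((fun ω => f (X ω)) ⁻¹' {t})).toReal
      = ∑ t ∈ Finset.univ.image f,
          Real.negMulLog (μ ((fun ω => f (X ω)) ⁻¹' {t})).toReal := by
        refine (Finset.sum_subset (Finset.subset_univ _) ?_).symm
        intro t _ ht
        have hempty : (fun ω => f (X ω)) ⁻¹' {t} = ∅ := by
          ext ω
          simp only [Set.mem_preimage, Set.mem_singleton_iff, Set.mem_empty_iff_false,
            iff_false]
          intro hc
          exact ht (Finset.mem_image.mpr ⟨X ω, Finset.mem_univ _, hc⟩)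
        simp [hempty]
    _ = ∑ s : S, Real.negMulLog (μ ((fun ω => f (X ω)) ⁻¹' {f s})).toReal :=
        Finset.sum_image (fun a _ b _ hab => hf hab)
    _ = ∑ s : S, Real.negMulLog (μ (X ⁻¹' {s})).toReal := by
        refine Finset.sum_congr rfl fun s _ => ?_
        have hpre : (fun ω => f (X ω)) ⁻¹' {f s} = X ⁻¹' {s} := by
          ext ω; simp [hf.eq_iff]
        rw [hpre]

lemma ent_unique (μ : Measure Ω) [IsProbabilityMeasure μ] {S : Type*} [Fintype S]
    [Nonempty S] [Subsingleton S] (X : Ω → S) : ent μ X = 0 := by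
  obtain ⟨s0⟩ := (inferInstance : Nonempty S)
  have hpre : X ⁻¹' {s0} = Set.univ := by
    ext ω; simpa using (Subsingleton.elim (X ω) s0)
  have : (Finset.univ : Finset S) = {s0} := by
    ext s; simpa using (Subsingleton.elim s s0)
  rw [ent, this, Finset.sum_singleton, hpre, measure_univ]
  simp

lemma prefix_snoc {F : ℕ → Type*} (X : (t : ℕ) → Ω → F t) (t : ℕ) (ω : Ω) :
    prefixRV X (t + 1) ω
      = (Fin.snoc (prefixRV X t ω) (X (t + 1) ω) :
          (i : Fin (t + 1)) → F (i.val + 1)) := by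
  funext i
  refine Fin.lastCases ?_ (fun j => ?_) i
  · simp [prefixRV, Fin.snoc_last]
  · simp [prefixRV, Fin.snoc_castSucc]

lemma snoc_inj {F : ℕ → Type*} (t : ℕ) :
    Function.Injective (fun p : ((i : Fin t) → F (i.val + 1)) × F (t + 1) =>
      (Fin.snoc p.1 p.2 : (i : Fin (t + 1)) → F (i.val + 1))) := by
  intro a b hab
  have h2 : a.2 = b.2 := by
    have := congrFun hab (Fin.last t); simpa using this
  have h1 : a.1 = b.1 := by
    funext i
    have := congrFun hab i.castSucc
    simpa using this
  exact Prod.ext h1 h2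

end Aux

/-- **Massey's conservation law** (identity underlying the finite shared-bridge budget).
With `A^t = (A_1,…,A_t)` and `O^t = (O_1,…,O_t)`,
`Σ_{t=1}^T I[A^t : O_t | O^{t−1}] + Σ_{t=1}^T I[O^{t−1} : A_t | A^{t−1}] = I[A^T : O^T]`:
directed information from actions to observations plus directed information (plasticity)
from past observations to actions equals the total mutual information between the action
and observation sequences. -/
theorem massey_conservation
    {Ω : Type*} [MeasurableSpace Ω] (μ : Measure Ω) [IsProbabilityMeasure μ] (T : ℕ)
    {𝒜 𝒪 : ℕ → Type*} [∀ t, Fintype (𝒜 t)] [∀ t, Fintype (𝒪 t)]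
    [∀ t, MeasurableSpace (𝒜 t)] [∀ t, MeasurableSingletonClass (𝒜 t)]
    [∀ t, MeasurableSpace (𝒪 t)] [∀ t, MeasurableSingletonClass (𝒪 t)]
    (A : (t : ℕ) → Ω → 𝒜 t) (O : (t : ℕ) → Ω → 𝒪 t)
    (hA : ∀ t, Measurable (A t)) (hO : ∀ t, Measurable (O t)) :
    (∑ t ∈ Finset.range T,
        condMutInfo μ (prefixRV A (t + 1)) (O (t + 1)) (prefixRV O t))
      + (∑ t ∈ Finset.range T,
        condMutInfo μ (prefixRV O t) (A (t + 1)) (prefixRV A t))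
      = mutInfo μ (prefixRV A T) (prefixRV O T) := by
  classical
  have key : ∀ t : ℕ,
      condMutInfo μ (prefixRV A (t + 1)) (O (t + 1)) (prefixRV O t)
        + condMutInfo μ (prefixRV O t) (A (t + 1)) (prefixRV A t)
      = (ent μ (prefixRV O (t + 1)) - ent μ (prefixRV O t))
        + (ent μ (prefixRV A (t + 1)) - ent μ (prefixRV A t))
        - (ent μ (fun ω => (prefixRV A (t + 1) ω, prefixRV O (t + 1) ω))
            - ent μ (fun ω => (prefixRV A t ω, prefixRV O t ω))) := by
    intro t
    have e1 : ent μ (prefixRV O (t + 1))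
        = ent μ (fun ω => (O (t + 1) ω, prefixRV O t ω)) :=
      ent_eq_of_inj μ (fun ω => (O (t + 1) ω, prefixRV O t ω)) (prefixRV O (t + 1))
        ((fun p : ((i : Fin t) → 𝒪 (i.val + 1)) × 𝒪 (t + 1) =>
            (Fin.snoc p.1 p.2 : (i : Fin (t + 1)) → 𝒪 (i.val + 1))) ∘ Prod.swap)
        ((snoc_inj t).comp Prod.swap_injective)
        (fun ω => prefix_snoc O t ω)
    have e2 : ent μ (prefixRV A (t + 1))
        = ent μ (fun ω => (A (t + 1) ω, prefixRV A t ω)) :=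
      ent_eq_of_inj μ (fun ω => (A (t + 1) ω, prefixRV A t ω)) (prefixRV A (t + 1))
        ((fun p : ((i : Fin t) → 𝒜 (i.val + 1)) × 𝒜 (t + 1) =>
            (Fin.snoc p.1 p.2 : (i : Fin (t + 1)) → 𝒜 (i.val + 1))) ∘ Prod.swap)
        ((snoc_inj t).comp Prod.swap_injective)
        (fun ω => prefix_snoc A t ω)
    have e3 : ent μ (fun ω => (prefixRV A (t + 1) ω, prefixRV O (t + 1) ω))
        = ent μ (fun ω => ((prefixRV A (t + 1) ω, O (t + 1) ω), prefixRV O t ω)) := by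
      refine ent_eq_of_inj μ _ _
        (fun p : (((i : Fin (t + 1)) → 𝒜 (i.val + 1)) × 𝒪 (t + 1))
            × ((i : Fin t) → 𝒪 (i.val + 1)) =>
          (p.1.1, (Fin.snoc p.2 p.1.2 : (i : Fin (t + 1)) → 𝒪 (i.val + 1)))) ?_ ?_
      · intro a b h
        obtain ⟨⟨a1, a2⟩, a3⟩ := a
        obtain ⟨⟨b1, b2⟩, b3⟩ := b
        simp only [Prod.mk.injEq] at h ⊢
        have h2 : ((a3, a2) : ((i : Fin t) → 𝒪 (i.val + 1)) × 𝒪 (t + 1)) = (b3, b2) :=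
          snoc_inj t h.2
        simp only [Prod.mk.injEq] at h2
        exact ⟨⟨h.1, h2.2⟩, h2.1⟩
      · intro ω
        exact Prod.ext rfl (prefix_snoc O t ω)
    have e4 : ent μ (fun ω => (prefixRV A (t + 1) ω, prefixRV O t ω))
        = ent μ (fun ω => ((prefixRV O t ω, A (t + 1) ω), prefixRV A t ω)) := by
      refine ent_eq_of_inj μ _ _
        (fun p : (((i : Fin t) → 𝒪 (i.val + 1)) × 𝒜 (t + 1))
            × ((i : Fin t) → 𝒜 (i.val + 1)) =>
          ((Fin.snoc p.2 p.1.2 : (i : Fin (t + 1)) → 𝒜 (i.val + 1)), p.1.1)) ?_ ?_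
      · intro a b h
        obtain ⟨⟨a1, a2⟩, a3⟩ := a
        obtain ⟨⟨b1, b2⟩, b3⟩ := b
        simp only [Prod.mk.injEq] at h ⊢
        have h2 : ((a3, a2) : ((i : Fin t) → 𝒜 (i.val + 1)) × 𝒜 (t + 1)) = (b3, b2) :=
          snoc_inj t h.1
        simp only [Prod.mk.injEq] at h2
        exact ⟨⟨h.2, h2.2⟩, h2.1⟩
      · intro ω
        exact Prod.ext (prefix_snoc A t ω) rfl
    have e5 : ent μ (fun ω => (prefixRV A t ω, prefixRV O t ω))
        = ent μ (fun ω => (prefixRV O t ω, prefixRV A t ω)) :=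
      ent_eq_of_inj μ _ _ Prod.swap Prod.swap_injective (fun ω => rfl)
    simp only [condMutInfo, condEnt]
    rw [← e1, ← e2, ← e3, ← e4, ← e5]
    ring
  calc
    (∑ t ∈ Finset.range T,
        condMutInfo μ (prefixRV A (t + 1)) (O (t + 1)) (prefixRV O t))
      + (∑ t ∈ Finset.range T,
        condMutInfo μ (prefixRV O t) (A (t + 1)) (prefixRV A t))
      = ∑ t ∈ Finset.range T,
          (condMutInfo μ (prefixRV A (t + 1)) (O (t + 1)) (prefixRV O t)
            + condMutInfo μ (prefixRV O t) (A (t + 1)) (prefixRV A t)) :=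
        Finset.sum_add_distrib.symm
    _ = ∑ t ∈ Finset.range T,
          ((ent μ (prefixRV O (t + 1)) - ent μ (prefixRV O t))
            + (ent μ (prefixRV A (t + 1)) - ent μ (prefixRV A t))
            - (ent μ (fun ω => (prefixRV A (t + 1) ω, prefixRV O (t + 1) ω))
                - ent μ (fun ω => (prefixRV A t ω, prefixRV O t ω)))) :=
        Finset.sum_congr rfl (fun t _ => key t)
    _ = (ent μ (prefixRV O T) - ent μ (prefixRV O 0))
          + (ent μ (prefixRV A T) - ent μ (prefixRV A 0))
          - (ent μ (fun ω => (prefixRV A T ω, prefixRV O T ω))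
              - ent μ (fun ω => (prefixRV A 0 ω, prefixRV O 0 ω))) := by
        rw [Finset.sum_sub_distrib, Finset.sum_add_distrib,
          Finset.sum_range_sub (fun t => ent μ (prefixRV O t)),
          Finset.sum_range_sub (fun t => ent μ (prefixRV A t)),
          Finset.sum_range_sub
            (fun t => ent μ (fun ω => (prefixRV A t ω, prefixRV O t ω)))]
    _ = mutInfo μ (prefixRV A T) (prefixRV O T) := by
        rw [ent_unique μ (prefixRV O 0), ent_unique μ (prefixRV A 0),
          ent_unique μ (fun ω => (prefixRV A 0 ω, prefixRV O 0 ω)), mutInfo]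
        ring
end

section
/- Let (A_1, …, A_T), (O_1, …, O_T), and B be random variables on a common probability space with values in finite types, and suppose the action sequence A^T = (A_1,…,A_T) and the observation sequence O^T = (O_1,…,O_T) are conditionally independent given B (all dependence is mediated by the finite bridge transcript B). If H[B] ≤ b, then I(A^T → O^T) + I(O^{T−1} → A^T) = I[A^T : O^T] ≤ I[A^T : B] ≤ H[B] ≤ b. (Theorem 'Finite shared-bridge budget': outward influence and inward plasticity through a shared finite bridge obey a capacity budget.) -/
open MeasureTheory Real

/-! The directed-information identity telescopes: by the chain rule the two increments at time
`t + 1` add up to `I[A^{t+1} : O^{t+1}] - I[A^t : O^t]`, and `I[A^0 : O^0] = 0`.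
For the bound, conditional independence given `B` makes `I[A : O | B]` vanish, while
submodularity of entropy gives `I[A : B | O] ≥ 0`; expanding `I[A : (B, O)]` both ways yields
`I[A : O] ≤ I[A : B]`, and `I[A : B] ≤ H[B]` because `H[A] ≤ H[A, B]`. Submodularity and its
equality case reduce, fibre by fibre of the conditioning variable, to Gibbs' inequality
`log x ≤ x - 1` for an unnormalised joint mass function. -/

open Finset

section MassFunction
variable {ι α β : Type*} [Fintype α] [Fintype β]

lemma negMulLog_sum_le_sum_negMulLog {s : Finset ι} {f : ι → ℝ} (hf : ∀ i ∈ s, 0 ≤ f i) :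
    negMulLog (∑ i ∈ s, f i) ≤ ∑ i ∈ s, negMulLog (f i) := by
  simp only [negMulLog, neg_mul, sum_mul, ← sum_neg_distrib]
  refine sum_le_sum fun i hi => neg_le_neg ?_
  rcases (hf i hi).eq_or_lt with h0 | hpos
  · simp [← h0]
  · exact mul_le_mul_of_nonneg_left (log_le_log hpos (single_le_sum hf hi)) hpos.le

/-- For the unnormalised law `q s t = μ(X = s, Y = t, Z = u)` this is
`μ(Z = u) * I[X : Y | Z = u]`. -/
noncomputable def massMutInfo (q : α → β → ℝ) : ℝ :=
  ∑ a, negMulLog (∑ b, q a b) + ∑ b, negMulLog (∑ a, q a b)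
    - negMulLog (∑ a, ∑ b, q a b) - ∑ a, ∑ b, negMulLog (q a b)

lemma massMutInfo_eq_sum_mul_log (q : α → β → ℝ) :
    massMutInfo q = ∑ a, ∑ b, q a b * (log (q a b) + log (∑ a', ∑ b', q a' b')
      - log (∑ b', q a b') - log (∑ a', q a' b)) := by
  simp only [massMutInfo, negMulLog, neg_mul, sum_mul, sum_neg_distrib]
  rw [Finset.sum_comm (γ := β)]
  simp only [mul_add, mul_sub, sum_add_distrib, sum_sub_distrib]
  ring

lemma sub_le_mul_log_sub_log {x y : ℝ} (hx : 0 ≤ x) (hy : 0 ≤ y) (hxy : 0 < x → 0 < y) :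
    x - y ≤ x * (log x - log y) := by
  rcases hx.eq_or_lt with rfl | hx
  · simpa using hy
  have hy := hxy hx
  have := one_sub_inv_le_log_of_pos (div_pos hx hy)
  rw [log_div hx.ne' hy.ne', inv_div] at this
  calc x - y = x * (1 - y / x) := by field_simp
    _ ≤ x * (log x - log y) := mul_le_mul_of_nonneg_left this hx.le

lemma massMutInfo_nonneg {q : α → β → ℝ} (hq : ∀ a b, 0 ≤ q a b) : 0 ≤ massMutInfo q := by
  set m := ∑ a, ∑ b, q a b
  set qA := fun a => ∑ b, q a b
  set qB := fun b => ∑ a, q a b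
  have hqA : ∀ a b, q a b ≤ qA a := fun a b => single_le_sum (fun b _ => hq a b) (mem_univ b)
  have hqB : ∀ a b, q a b ≤ qB b := fun a b => single_le_sum (fun a _ => hq a b) (mem_univ a)
  have hAm : ∀ a, qA a ≤ m := fun a =>
    single_le_sum (fun a _ => sum_nonneg fun b _ => hq a b) (mem_univ a)
  have term : ∀ a b, q a b - qA a * qB b / m
      ≤ q a b * (log (q a b) + log m - log (qA a) - log (qB b)) := by
    intro a b
    rcases (hq a b).eq_or_lt with h0 | hpos
    · simp only [← h0, zero_sub, zero_mul, neg_nonpos]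
      exact div_nonneg (mul_nonneg ((hq a b).trans (hqA a b)) ((hq a b).trans (hqB a b)))
        ((hq a b).trans ((hqA a b).trans (hAm a)))
    have hA := hpos.trans_le (hqA a b)
    have hB := hpos.trans_le (hqB a b)
    have hm := hA.trans_le (hAm a)
    have := sub_le_mul_log_sub_log (y := qA a * qB b / m) hpos.le (by positivity)
      (fun _ => by positivity)
    rwa [log_div (by positivity) hm.ne', log_mul hA.ne' hB.ne', sub_sub_eq_add_sub,
      sub_add_eq_sub_sub] at this
  have hsum : ∑ a, ∑ b, qA a * qB b / m = m := by
    simp only [← sum_div, ← mul_sum, ← sum_mul]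
    rw [show ∑ b, qB b = m from Finset.sum_comm, mul_self_div_self]
  rw [massMutInfo_eq_sum_mul_log]
  calc (0 : ℝ) = ∑ a, ∑ b, (q a b - qA a * qB b / m) := by
        simp only [sum_sub_distrib, hsum]; exact (sub_self m).symm
    _ ≤ _ := sum_le_sum fun a _ => sum_le_sum fun b _ => term a b

lemma massMutInfo_eq_zero {q : α → β → ℝ} (hq : ∀ a b, 0 ≤ q a b)
    (hprod : ∀ a b, q a b * ∑ a', ∑ b', q a' b' = (∑ b', q a b') * ∑ a', q a' b) :
    massMutInfo q = 0 := by
  rw [massMutInfo_eq_sum_mul_log]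
  refine sum_eq_zero fun a _ => sum_eq_zero fun b _ => ?_
  rcases (hq a b).eq_or_lt with h0 | hpos
  · rw [← h0, zero_mul]
  have hA : 0 < ∑ b', q a b' := hpos.trans_le (single_le_sum (fun b _ => hq a b) (mem_univ b))
  have hB : 0 < ∑ a', q a' b := hpos.trans_le (single_le_sum (fun a _ => hq a b) (mem_univ a))
  have hm : 0 < ∑ a', ∑ b', q a' b' :=
    hA.trans_le (single_le_sum (fun a _ => sum_nonneg fun b _ => hq a b) (mem_univ a))
  rw [← log_mul hpos.ne' hm.ne', hprod, log_mul hA.ne' hB.ne']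
  ring

end MassFunction

section Entropy
variable {Ω : Type*} [MeasurableSpace Ω] (μ : Measure Ω) {S T U : Type*} [Fintype S] [Fintype T]
  [Fintype U]

lemma ent_comp_of_injective {f : S → T} (hf : Function.Injective f) (X : Ω → S) :
    ent μ (fun ω => f (X ω)) = ent μ X := by
  refine (Fintype.sum_of_injective f hf _ _ (fun t ht => ?_) fun s => ?_).symm
  · have : (fun ω => f (X ω)) ⁻¹' {t} = ∅ :=
      Set.eq_empty_of_forall_notMem fun ω hω => ht ⟨X ω, hω⟩
    simp [this]
  · simp only [Set.preimage, Set.mem_singleton_iff, hf.eq_iff]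

lemma ent_pair_comm (X : Ω → S) (Y : Ω → T) :
    ent μ (fun ω => (Y ω, X ω)) = ent μ (fun ω => (X ω, Y ω)) :=
  ent_comp_of_injective μ Prod.swap_injective (fun ω => (X ω, Y ω))

lemma ent_pair_pair_right_comm (X : Ω → S) (Y : Ω → T) (Z : Ω → U) :
    ent μ (fun ω => ((X ω, Z ω), Y ω)) = ent μ (fun ω => ((X ω, Y ω), Z ω)) :=
  ent_comp_of_injective μ (f := fun p : (S × T) × U => ((p.1.1, p.2), p.1.2))
    (Function.LeftInverse.injective (g := fun p => ((p.1.1, p.2), p.1.2)) fun _ => rfl)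
    (fun ω => ((X ω, Y ω), Z ω))

lemma ent_eq_zero_of_unique [IsProbabilityMeasure μ] [Unique S] (X : Ω → S) : ent μ X = 0 := by
  have : X ⁻¹' {default} = Set.univ := Set.eq_univ_of_forall fun ω => Subsingleton.elim _ _
  simp [ent, this]

lemma mutInfo_eq_zero_of_unique [IsProbabilityMeasure μ] [Unique S] (X : Ω → S) (Y : Ω → T) :
    mutInfo μ X Y = 0 := by
  obtain rfl : X = fun _ => default := funext fun ω => Subsingleton.elim _ _
  rw [mutInfo, ent_eq_zero_of_unique, ent_comp_of_injective μ (Prod.mk_right_injective default)]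
  ring

lemma ent_pair_eq_sum (X : Ω → S) (Y : Ω → T) :
    ent μ (fun ω => (X ω, Y ω)) = ∑ s, ∑ t, negMulLog (μ.real (X ⁻¹' {s} ∩ Y ⁻¹' {t})) := by
  simp only [ent, Fintype.sum_prod_type, ← Set.singleton_prod_singleton, Set.mk_preimage_prod,
    measureReal_def]

variable [IsFiniteMeasure μ] [MeasurableSpace T] [MeasurableSingletonClass T]

lemma measureReal_eq_sum_inter_preimage {E : Set Ω} (hE : MeasurableSet E) {Y : Ω → T}
    (hY : Measurable Y) : μ.real E = ∑ t, μ.real (E ∩ Y ⁻¹' {t}) := by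
  rw [← measureReal_biUnion_finset _ fun t _ => hE.inter (hY (measurableSet_singleton t))]
  · simp [← Set.inter_iUnion, ← Set.preimage_iUnion, Set.iUnion_of_singleton]
  · exact fun t _ t' _ h => Disjoint.inter_left' E (Disjoint.inter_right' E
      (Disjoint.preimage Y (Set.disjoint_singleton.2 h)))

variable [MeasurableSpace S] [MeasurableSingletonClass S]

lemma ent_le_ent_pair {X : Ω → S} (hX : Measurable X) {Y : Ω → T} (hY : Measurable Y) :
    ent μ X ≤ ent μ (fun ω => (X ω, Y ω)) := by
  rw [ent_pair_eq_sum]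
  refine sum_le_sum fun s _ => ?_
  rw [← measureReal_def, measureReal_eq_sum_inter_preimage μ (hX (measurableSet_singleton s)) hY]
  exact negMulLog_sum_le_sum_negMulLog fun t _ => measureReal_nonneg

lemma mutInfo_le_ent_right {X : Ω → S} (hX : Measurable X) {Y : Ω → T} (hY : Measurable Y) :
    mutInfo μ X Y ≤ ent μ Y := by
  have := ent_le_ent_pair μ hX hY
  rw [mutInfo]
  linarith

end Entropy

noncomputable def jointMass {Ω S T U : Type*} [MeasurableSpace Ω] (μ : Measure Ω) (X : Ω → S)
    (Y : Ω → T) (Z : Ω → U) (u : U) (s : S) (t : T) : ℝ :=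
  μ.real (X ⁻¹' {s} ∩ Y ⁻¹' {t} ∩ Z ⁻¹' {u})

section Submodularity
variable {Ω : Type*} [MeasurableSpace Ω] (μ : Measure Ω) [IsFiniteMeasure μ] {S T U : Type*}
  [MeasurableSpace S] [MeasurableSingletonClass S] [MeasurableSpace T] [MeasurableSingletonClass T]
  [MeasurableSpace U] [MeasurableSingletonClass U]
  {X : Ω → S} {Y : Ω → T} {Z : Ω → U} (hX : Measurable X) (hY : Measurable Y) (hZ : Measurable Z)
include hX hY hZ

lemma sum_jointMass_right [Fintype T] (u : U) (s : S) :
    ∑ t, jointMass μ X Y Z u s t = μ.real (X ⁻¹' {s} ∩ Z ⁻¹' {u}) := by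
  rw [measureReal_eq_sum_inter_preimage μ ((hX (measurableSet_singleton s)).inter
    (hZ (measurableSet_singleton u))) hY]
  simp only [jointMass, Set.inter_right_comm]

lemma sum_jointMass_left [Fintype S] (u : U) (t : T) :
    ∑ s, jointMass μ X Y Z u s t = μ.real (Y ⁻¹' {t} ∩ Z ⁻¹' {u}) := by
  rw [measureReal_eq_sum_inter_preimage μ ((hY (measurableSet_singleton t)).inter
    (hZ (measurableSet_singleton u))) hX]
  simp only [jointMass, Set.inter_comm _ (X ⁻¹' _), Set.inter_assoc]

lemma sum_sum_jointMass [Fintype S] [Fintype T] (u : U) :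
    ∑ s, ∑ t, jointMass μ X Y Z u s t = μ.real (Z ⁻¹' {u}) := by
  rw [measureReal_eq_sum_inter_preimage μ (hZ (measurableSet_singleton u)) hX]
  simp only [sum_jointMass_right μ hX hY hZ, Set.inter_comm (Z ⁻¹' _)]

variable [Fintype S] [Fintype T] [Fintype U]

lemma ent_pair_add_ent_pair_sub_eq_sum_massMutInfo :
    ent μ (fun ω => (X ω, Z ω)) + ent μ (fun ω => (Y ω, Z ω)) - ent μ Z
      - ent μ (fun ω => ((X ω, Y ω), Z ω)) = ∑ u, massMutInfo (jointMass μ X Y Z u) := by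
  rw [ent_pair_comm μ Z X, ent_pair_comm μ Z Y, ent_pair_comm μ Z (fun ω => (X ω, Y ω)),
    ent_pair_eq_sum, ent_pair_eq_sum, ent_pair_eq_sum, ent]
  simp only [Set.inter_comm (Z ⁻¹' _), ← measureReal_def, Fintype.sum_prod_type,
    ← Set.singleton_prod_singleton, Set.mk_preimage_prod, ← sum_jointMass_right μ hX hY hZ,
    ← sum_jointMass_left μ hX hY hZ, ← sum_sum_jointMass μ hX hY hZ, massMutInfo,
    sum_add_distrib, sum_sub_distrib]
  rfl

lemma ent_submodular :
    ent μ Z + ent μ (fun ω => ((X ω, Y ω), Z ω))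
      ≤ ent μ (fun ω => (X ω, Z ω)) + ent μ (fun ω => (Y ω, Z ω)) := by
  have := ent_pair_add_ent_pair_sub_eq_sum_massMutInfo μ hX hY hZ
  have := sum_nonneg fun u (_ : u ∈ univ) =>
    massMutInfo_nonneg (q := jointMass μ X Y Z u) fun _ _ => measureReal_nonneg
  linarith

lemma ent_pair_add_ent_pair_eq_of_condIndep
    (hCI : ∀ s t u, μ (X ⁻¹' {s} ∩ Y ⁻¹' {t} ∩ Z ⁻¹' {u}) * μ (Z ⁻¹' {u})
      = μ (X ⁻¹' {s} ∩ Z ⁻¹' {u}) * μ (Y ⁻¹' {t} ∩ Z ⁻¹' {u})) :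
    ent μ (fun ω => (X ω, Z ω)) + ent μ (fun ω => (Y ω, Z ω))
      = ent μ Z + ent μ (fun ω => ((X ω, Y ω), Z ω)) := by
  have hprod (u s t) : jointMass μ X Y Z u s t * ∑ s', ∑ t', jointMass μ X Y Z u s' t'
      = (∑ t', jointMass μ X Y Z u s t') * ∑ s', jointMass μ X Y Z u s' t := by
    rw [sum_sum_jointMass μ hX hY hZ, sum_jointMass_right μ hX hY hZ,
      sum_jointMass_left μ hX hY hZ]
    simp only [jointMass, measureReal_def, ← ENNReal.toReal_mul, hCI]
  have := ent_pair_add_ent_pair_sub_eq_sum_massMutInfo μ hX hY hZ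
  rw [sum_eq_zero fun u _ => massMutInfo_eq_zero (q := jointMass μ X Y Z u)
    (fun _ _ => measureReal_nonneg) (hprod u)] at this
  linarith

lemma mutInfo_le_mutInfo_of_condIndep
    (hCI : ∀ s t u, μ (X ⁻¹' {s} ∩ Y ⁻¹' {t} ∩ Z ⁻¹' {u}) * μ (Z ⁻¹' {u})
      = μ (X ⁻¹' {s} ∩ Z ⁻¹' {u}) * μ (Y ⁻¹' {t} ∩ Z ⁻¹' {u})) :
    mutInfo μ X Y ≤ mutInfo μ X Z := by
  have hsub := ent_submodular μ hX hZ hY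
  have hci := ent_pair_add_ent_pair_eq_of_condIndep μ hX hY hZ hCI
  rw [ent_pair_comm μ Y Z, ent_pair_pair_right_comm μ X Y Z] at hsub
  simp only [mutInfo]
  linarith

end Submodularity

section Prefix
variable {Ω : Type*} [MeasurableSpace Ω] (μ : Measure Ω) {F G : ℕ → Type*}

lemma measurable_prefixRV [∀ t, MeasurableSpace (F t)] {X : (t : ℕ) → Ω → F t}
    (hX : ∀ t, Measurable (X t)) (t : ℕ) : Measurable (prefixRV X t) :=
  measurable_pi_lambda _ fun _ => hX _

variable [∀ t, Fintype (F t)] [∀ t, Fintype (G t)]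

lemma ent_last_prefixRV (X : (t : ℕ) → Ω → F t) (t : ℕ) :
    ent μ (fun ω => (X (t + 1) ω, prefixRV X t ω)) = ent μ (prefixRV X (t + 1)) :=
  ent_comp_of_injective μ
    (f := fun p : (i : Fin (t + 1)) → F (i.val + 1) => (p (Fin.last t), Fin.init p))
    (Function.LeftInverse.injective (g := fun q => Fin.snoc q.2 q.1) fun p =>
      Fin.snoc_init_self p)
    (prefixRV X (t + 1))

lemma ent_pair_last_prefixRV {S : Type*} [Fintype S] (Y : Ω → S) (X : (t : ℕ) → Ω → F t)
    (t : ℕ) : ent μ (fun ω => ((Y ω, X (t + 1) ω), prefixRV X t ω))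
      = ent μ (fun ω => (Y ω, prefixRV X (t + 1) ω)) :=
  ent_comp_of_injective μ
    (f := fun p : S × ((i : Fin (t + 1)) → F (i.val + 1)) =>
      ((p.1, p.2 (Fin.last t)), Fin.init p.2))
    (Function.LeftInverse.injective (g := fun q => (q.1.1, Fin.snoc q.2 q.1.2))
      fun p => by simp only [Fin.snoc_init_self])
    (fun ω => (Y ω, prefixRV X (t + 1) ω))

lemma condMutInfo_add_condMutInfo_prefixRV (A : (t : ℕ) → Ω → F t) (O : (t : ℕ) → Ω → G t)
    (t : ℕ) :
    condMutInfo μ (prefixRV A (t + 1)) (O (t + 1)) (prefixRV O t)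
        + condMutInfo μ (prefixRV O t) (A (t + 1)) (prefixRV A t)
      = mutInfo μ (prefixRV A (t + 1)) (prefixRV O (t + 1))
        - mutInfo μ (prefixRV A t) (prefixRV O t) := by
  simp only [condMutInfo, condEnt, mutInfo]
  rw [ent_last_prefixRV, ent_last_prefixRV, ent_pair_last_prefixRV, ent_pair_last_prefixRV,
    ent_pair_comm μ (prefixRV A t) (prefixRV O t),
    ent_pair_comm μ (prefixRV A (t + 1)) (prefixRV O t)]
  ring

lemma directedInfo_add_directedInfo_eq_mutInfo [IsProbabilityMeasure μ]
    (A : (t : ℕ) → Ω → F t) (O : (t : ℕ) → Ω → G t) (T : ℕ) :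
    (∑ t ∈ range T, condMutInfo μ (prefixRV A (t + 1)) (O (t + 1)) (prefixRV O t))
        + (∑ t ∈ range T, condMutInfo μ (prefixRV O t) (A (t + 1)) (prefixRV A t))
      = mutInfo μ (prefixRV A T) (prefixRV O T) := by
  rw [← sum_add_distrib, sum_congr rfl fun t _ => condMutInfo_add_condMutInfo_prefixRV μ A O t,
    sum_range_sub (fun t => mutInfo μ (prefixRV A t) (prefixRV O t)),
    mutInfo_eq_zero_of_unique μ (prefixRV A 0) (prefixRV O 0), sub_zero]

end Prefix

/-- **Finite shared-bridge budget.**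
If all statistical dependence between the action sequence `A^T` and the observation
sequence `O^T` is mediated by a finite bridge transcript `B` (conditional independence
of `A^T` and `O^T` given `B`) with `H[B] ≤ b`, then
`I(A^T → O^T) + I(O^{T−1} → A^T) = I[A^T : O^T] ≤ I[A^T : B] ≤ H[B] ≤ b`. -/
theorem finite_shared_bridge_budget
    {Ω : Type*} [MeasurableSpace Ω] (μ : Measure Ω) [IsProbabilityMeasure μ] (T : ℕ)
    {𝒜 𝒪 : ℕ → Type*} [∀ t, Fintype (𝒜 t)] [∀ t, Fintype (𝒪 t)]
    [∀ t, MeasurableSpace (𝒜 t)] [∀ t, MeasurableSingletonClass (𝒜 t)]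
    [∀ t, MeasurableSpace (𝒪 t)] [∀ t, MeasurableSingletonClass (𝒪 t)]
    {ℬ : Type*} [Fintype ℬ] [MeasurableSpace ℬ] [MeasurableSingletonClass ℬ]
    (A : (t : ℕ) → Ω → 𝒜 t) (O : (t : ℕ) → Ω → 𝒪 t) (B : Ω → ℬ)
    (hA : ∀ t, Measurable (A t)) (hO : ∀ t, Measurable (O t)) (hB : Measurable B)
    (hCI : ∀ (a : (i : Fin T) → 𝒜 (i.val + 1)) (o : (i : Fin T) → 𝒪 (i.val + 1)) (c : ℬ),
      μ (prefixRV A T ⁻¹' {a} ∩ prefixRV O T ⁻¹' {o} ∩ B ⁻¹' {c}) * μ (B ⁻¹' {c})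
        = μ (prefixRV A T ⁻¹' {a} ∩ B ⁻¹' {c}) * μ (prefixRV O T ⁻¹' {o} ∩ B ⁻¹' {c}))
    (b : ℝ) (hb : ent μ B ≤ b) :
    (∑ t ∈ Finset.range T,
        condMutInfo μ (prefixRV A (t + 1)) (O (t + 1)) (prefixRV O t))
      + (∑ t ∈ Finset.range T,
        condMutInfo μ (prefixRV O t) (A (t + 1)) (prefixRV A t))
      = mutInfo μ (prefixRV A T) (prefixRV O T) ∧
    mutInfo μ (prefixRV A T) (prefixRV O T) ≤ mutInfo μ (prefixRV A T) B ∧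
    mutInfo μ (prefixRV A T) B ≤ ent μ B ∧ ent μ B ≤ b := by
  have hAT := measurable_prefixRV hA T
  have hOT := measurable_prefixRV hO T
  exact ⟨directedInfo_add_directedInfo_eq_mutInfo μ A O T,
    mutInfo_le_mutInfo_of_condIndep μ hAT hOT hB hCI, mutInfo_le_ent_right μ hAT hB, hb⟩
end
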